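/- arXiv:2007.09694 — 5 statements merged into one kernel-verified Lean document; each statement's English description precedes it below -/
import Mathlib

section
/- The total length of the quantised interval converges to π as the deformation parameter tends to 1: lim_{q→1⁻} ∑_{k=0}^∞ (1−q²) q^k / √(1 − q^{2(k+1)}) = π. Equivalently, with the notation of the metric d_q, lim_{q→1⁻} d_q(0,1) = π. -/
/-!
The `k`-th term equals `(1 + q) (q^k - q^(k+1)) / √(1 - q^(2(k+1)))`, so the series is a
Riemann sum of `(1 + q) / √(1 - x²)` over the geometric partition `{q^k}` of `[0, 1]`,
evaluated at the left endpoint `q^(k+1)` of each cell. As `1 / √(1 - x²) = arcsin'` increases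
on `[0, 1)`, the mean value theorem bounds each term by `arcsin` increments; telescoping
squeezes the series between `(1 + q) / q · arcsin q` and `(1 + q) · π / 2`, and both tend to
`π` as `q → 1`.
-/

open Real Filter Topology

lemma hasSum_sub_succ_of_antitone {f : ℕ → ℝ} (hf : Antitone f)
    (h0 : Tendsto f atTop (𝓝 0)) : HasSum (fun n => f n - f (n + 1)) (f 0) := by
  rw [hasSum_iff_tendsto_nat_of_nonneg fun n => sub_nonneg.2 (hf n.le_succ)]
  simp only [Finset.sum_range_sub' f]
  simpa using tendsto_const_nhds.sub h0

namespace Real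

lemma exists_arcsin_sub_eq_div {a b : ℝ} (ha : -1 ≤ a) (hab : a < b) (hb : b ≤ 1) :
    ∃ c ∈ Set.Ioo a b, arcsin b - arcsin a = (b - a) / √(1 - c ^ 2) := by
  obtain ⟨c, hc, hslope⟩ := exists_deriv_eq_slope arcsin hab continuous_arcsin.continuousOn
    fun x hx => (differentiableAt_arcsin.2
      ⟨by linarith [hx.1], by linarith [hx.2]⟩).differentiableWithinAt
  refine ⟨c, hc, ?_⟩
  rw [deriv_arcsin, eq_div_iff (sub_ne_zero.2 hab.ne')] at hslope
  rw [← hslope]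
  ring

lemma div_sqrt_le_arcsin_sub {a b : ℝ} (ha : 0 ≤ a) (hab : a ≤ b) (hb : b ≤ 1) :
    (b - a) / √(1 - a ^ 2) ≤ arcsin b - arcsin a := by
  rcases hab.eq_or_lt with rfl | hab
  · simp
  obtain ⟨c, hc, heq⟩ := exists_arcsin_sub_eq_div (by linarith) hab hb
  rw [heq]
  exact div_le_div_of_nonneg_left (by linarith) (sqrt_pos.2 (by nlinarith [hc.1, hc.2]))
    (sqrt_le_sqrt (by nlinarith [hc.1]))

lemma arcsin_sub_le_div_sqrt {a b : ℝ} (ha : 0 ≤ a) (hab : a ≤ b) (hb : b < 1) :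
    arcsin b - arcsin a ≤ (b - a) / √(1 - b ^ 2) := by
  rcases hab.eq_or_lt with rfl | hab
  · simp
  obtain ⟨c, hc, heq⟩ := exists_arcsin_sub_eq_div (by linarith) hab hb.le
  rw [heq]
  exact div_le_div_of_nonneg_left (by linarith) (sqrt_pos.2 (by nlinarith))
    (sqrt_le_sqrt (by nlinarith [hc.1, hc.2]))

end Real

/-- `1 / ρ_q(k)`, the `k`-th summand of `d_q(0, 1)`. -/
noncomputable def qIntervalTerm (q : ℝ) (k : ℕ) : ℝ :=
  (1 - q ^ 2) * q ^ k / √(1 - q ^ (2 * (k + 1)))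

lemma qIntervalTerm_eq (q : ℝ) (k : ℕ) :
    qIntervalTerm q k = (1 + q) * ((q ^ k - q ^ (k + 1)) / √(1 - (q ^ (k + 1)) ^ 2)) := by
  rw [qIntervalTerm, ← pow_mul, mul_comm (k + 1) 2]
  ring

section
variable {q : ℝ}

lemma qIntervalTerm_nonneg (hq0 : 0 ≤ q) (hq1 : q ≤ 1) (k : ℕ) : 0 ≤ qIntervalTerm q k :=
  div_nonneg (mul_nonneg (by nlinarith) (pow_nonneg hq0 k)) (sqrt_nonneg _)

lemma qIntervalTerm_le (hq0 : 0 ≤ q) (hq1 : q ≤ 1) (k : ℕ) :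
    qIntervalTerm q k ≤ (1 + q) * (arcsin (q ^ k) - arcsin (q ^ (k + 1))) := by
  rw [qIntervalTerm_eq]
  exact mul_le_mul_of_nonneg_left (div_sqrt_le_arcsin_sub (pow_nonneg hq0 _)
    (pow_le_pow_of_le_one hq0 hq1 k.le_succ) (pow_le_one₀ hq0 hq1)) (by linarith)

lemma le_qIntervalTerm (hq0 : 0 < q) (hq1 : q < 1) (k : ℕ) :
    (1 + q) / q * (arcsin (q ^ (k + 1)) - arcsin (q ^ (k + 2))) ≤ qIntervalTerm q k :=
  calc (1 + q) / q * (arcsin (q ^ (k + 1)) - arcsin (q ^ (k + 2)))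
      ≤ (1 + q) / q * ((q ^ (k + 1) - q ^ (k + 2)) / √(1 - (q ^ (k + 1)) ^ 2)) := by
        gcongr
        exact arcsin_sub_le_div_sqrt (pow_nonneg hq0.le _)
          (pow_le_pow_of_le_one hq0.le hq1.le (k + 1).le_succ)
          (pow_lt_one₀ hq0.le hq1 k.succ_ne_zero)
    _ = qIntervalTerm q k := by
        rw [qIntervalTerm_eq]
        field_simp
        ring

lemma hasSum_arcsin_pow_sub (hq0 : 0 ≤ q) (hq1 : q < 1) (m : ℕ) :
    HasSum (fun k => arcsin (q ^ (k + m)) - arcsin (q ^ (k + 1 + m))) (arcsin (q ^ m)) := by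
  have hanti : Antitone fun k => arcsin (q ^ (k + m)) :=
    monotone_arcsin.comp_antitone fun i j hij => pow_le_pow_of_le_one hq0 hq1.le (by omega)
  have hlim : Tendsto (fun k => arcsin (q ^ (k + m))) atTop (𝓝 0) :=
    (continuous_arcsin.tendsto' 0 0 arcsin_zero).comp
      ((tendsto_pow_atTop_nhds_zero_of_lt_one hq0 hq1).comp (tendsto_add_atTop_nat m))
  simpa [add_right_comm] using hasSum_sub_succ_of_antitone hanti hlim

lemma tsum_qIntervalTerm_mem_Icc (hq0 : 0 < q) (hq1 : q < 1) :
    ∑' k, qIntervalTerm q k ∈ Set.Icc ((1 + q) / q * arcsin q) ((1 + q) * (π / 2)) := by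
  have hupper := (hasSum_arcsin_pow_sub hq0.le hq1 0).mul_left (1 + q)
  have hlower := (hasSum_arcsin_pow_sub hq0.le hq1 1).mul_left ((1 + q) / q)
  simp only [add_zero, pow_zero, pow_one, arcsin_one] at hupper hlower
  have hsum : Summable (qIntervalTerm q) :=
    .of_nonneg_of_le (qIntervalTerm_nonneg hq0.le hq1.le) (qIntervalTerm_le hq0.le hq1.le)
      hupper.summable
  exact ⟨hasSum_le (le_qIntervalTerm hq0 hq1) hlower hsum.hasSum,
    hasSum_le (qIntervalTerm_le hq0.le hq1.le) hsum.hasSum hupper⟩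

end

/-- The total length of the quantised interval converges to `π` as the deformation parameter
tends to `1`:  `lim_{q→1⁻} ∑_{k=0}^∞ (1−q²)·q^k/√(1 − q^{2(k+1)}) = π`, i.e.
`lim_{q→1⁻} d_q(0,1) = π`. -/
theorem stmt_6 :
    Filter.Tendsto
      (fun q : ℝ => ∑' k : ℕ, (1 - q ^ 2) * q ^ k / Real.sqrt (1 - q ^ (2 * (k + 1))))
      (nhdsWithin 1 (Set.Ioo 0 1)) (nhds Real.pi) := by
  have hlower : Tendsto (fun q : ℝ => (1 + q) / q * arcsin q) (𝓝 1) (𝓝 π) := by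
    have : ContinuousAt (fun q : ℝ => (1 + q) / q * arcsin q) 1 := by fun_prop (disch := norm_num)
    convert this.tendsto using 2
    rw [arcsin_one]
    ring
  have hupper : Tendsto (fun q : ℝ => (1 + q) * (π / 2)) (𝓝 1) (𝓝 π) :=
    Continuous.tendsto' (by fun_prop) 1 π (by ring)
  refine tendsto_of_tendsto_of_tendsto_of_le_of_le' (hlower.mono_left nhdsWithin_le_nhds)
    (hupper.mono_left nhdsWithin_le_nhds) ?_ ?_ <;>
    filter_upwards [self_mem_nhdsWithin] with q hq
  exacts [(tsum_qIntervalTerm_mem_Icc hq.1 hq.2).1, (tsum_qIntervalTerm_mem_Icc hq.1 hq.2).2]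
end

section
/- Let q ∈ (0,1) and let f : X_q → ℂ be continuous with f(0) = 0 and Lipschitz with respect to d_q. For n ∈ ℕ₀ define the truncation f_n : X_q → ℂ by f_n(q^{2k}) = f(q^{2k}) for k ≤ n and f_n(x) = 0 otherwise. Then the sequence of Lipschitz seminorms {L_{d_q}(f_n)}_{n=0}^∞ is bounded. -/
/-!
The weights `1/ρ_q(k)` lie between `(1 - q²) q^k` and `q^k`, so the distance
`d_q(q^{2j}, 0)` (a geometric tail starting at `j`) is at most a constant `K_q` times the length
`d_q(q^{2j}, q^{2m})`, `j < m`, of any gap starting at `j`. A truncation `f_n` differs from `f`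
only by replacing values with `f(0) = 0`, so each difference quotient of `f_n` is a difference
quotient of `f` with the denominator shrunk by at most the factor `K_q`. Hence
`L(f_n) ≤ K_q · L(f)` for all `n`.
-/

/-- `X_q = {0} ∪ {q^{2k} : k ∈ ℕ₀} ⊆ ℝ`. -/
def Xq (q : ℝ) : Set ℝ := {0} ∪ {x : ℝ | ∃ n : ℕ, x = q ^ (2 * n)}

open Finset

noncomputable section

/-- The weight `1/ρ_q(k)`. -/
def qWeight (q : ℝ) (k : ℕ) : ℝ :=
  (1 - q ^ 2) * q ^ k / Real.sqrt (1 - q ^ (2 * (k + 1)))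

/-- `K_q`: tails satisfy `d_q(q^{2j}, 0) ≤ q^j / (1 - q)` and gaps
`d_q(q^{2j}, q^{2m}) ≥ (1 - q²) q^j`. -/
def qComparison (q : ℝ) : ℝ :=
  ((1 - q) * (1 - q ^ 2))⁻¹

/-- The points `q^{2k}`, `k ≤ n`, on which the truncation `f_n` agrees with `f`. -/
def XqUpTo (q : ℝ) (n : ℕ) : Set ℝ :=
  {x | ∃ k : ℕ, k ≤ n ∧ x = q ^ (2 * k)}

end

section Weight

variable {q : ℝ}

lemma one_sub_sq_pos (hq0 : 0 < q) (hq1 : q < 1) : 0 < 1 - q ^ 2 := by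
  nlinarith

lemma one_sub_sq_mul_pow_le_qWeight (hq0 : 0 < q) (hq1 : q < 1) (k : ℕ) :
    (1 - q ^ 2) * q ^ k ≤ qWeight q k := by
  have hpos : 0 < 1 - q ^ (2 * (k + 1)) := by
    linarith [pow_lt_one₀ hq0.le hq1 (by omega : 2 * (k + 1) ≠ 0)]
  have hsqrt : Real.sqrt (1 - q ^ (2 * (k + 1))) ≤ 1 :=
    Real.sqrt_le_one.mpr (by linarith [pow_nonneg hq0.le (2 * (k + 1))])
  exact (le_div_iff₀ (Real.sqrt_pos.mpr hpos)).mpr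
    (mul_le_of_le_one_right (mul_pos (one_sub_sq_pos hq0 hq1) (pow_pos hq0 k)).le hsqrt)

lemma qWeight_le_pow (hq0 : 0 < q) (hq1 : q < 1) (k : ℕ) : qWeight q k ≤ q ^ k := by
  have h2 := one_sub_sq_pos hq0 hq1
  -- `(1 - q²)² ≤ 1 - q² ≤ 1 - q^{2(k+1)}`
  have hsqrt : 1 - q ^ 2 ≤ Real.sqrt (1 - q ^ (2 * (k + 1))) := by
    have hpow : q ^ (2 * (k + 1)) ≤ q ^ 2 := pow_le_pow_of_le_one hq0.le hq1.le (by omega)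
    exact Real.le_sqrt_of_sq_le (by nlinarith)
  exact div_le_of_le_mul₀ (Real.sqrt_nonneg _) (pow_nonneg hq0.le k)
    (by rw [mul_comm (q ^ k)]; exact mul_le_mul_of_nonneg_right hsqrt (pow_nonneg hq0.le k))

lemma qWeight_pos (hq0 : 0 < q) (hq1 : q < 1) (k : ℕ) : 0 < qWeight q k :=
  (mul_pos (one_sub_sq_pos hq0 hq1) (pow_pos hq0 k)).trans_le
    (one_sub_sq_mul_pow_le_qWeight hq0 hq1 k)

lemma tsum_qWeight_add_le (hq0 : 0 < q) (hq1 : q < 1) (n : ℕ) :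
    ∑' k, qWeight q (n + k) ≤ q ^ n / (1 - q) := by
  have hgeom := summable_geometric_of_lt_one hq0.le hq1
  have hle : ∀ k, qWeight q (n + k) ≤ q ^ n * q ^ k := fun k =>
    (qWeight_le_pow hq0 hq1 (n + k)).trans_eq (pow_add q n k)
  calc ∑' k, qWeight q (n + k) ≤ ∑' k, q ^ n * q ^ k :=
        Summable.tsum_le_tsum hle
          (.of_nonneg_of_le (fun k => (qWeight_pos hq0 hq1 _).le) hle (hgeom.mul_left _))
          (hgeom.mul_left _)
    _ = q ^ n / (1 - q) := by
        rw [tsum_mul_left, tsum_geometric_of_lt_one hq0.le hq1, div_eq_mul_inv]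

lemma one_sub_sq_mul_pow_le_sum_Ico_qWeight (hq0 : 0 < q) (hq1 : q < 1) {a b : ℕ} (hab : a < b) :
    (1 - q ^ 2) * q ^ a ≤ ∑ k ∈ Ico a b, qWeight q k :=
  (one_sub_sq_mul_pow_le_qWeight hq0 hq1 a).trans
    (single_le_sum (fun k _ => (qWeight_pos hq0 hq1 k).le) (mem_Ico.mpr ⟨le_rfl, hab⟩))

lemma one_le_qComparison (hq0 : 0 < q) (hq1 : q < 1) : 1 ≤ qComparison q := by
  have h2 := one_sub_sq_pos hq0 hq1
  exact (one_le_inv₀ (mul_pos (by linarith) h2)).mpr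
    (mul_le_one₀ (by linarith) h2.le (by nlinarith))

lemma tsum_qWeight_add_le_qComparison_mul (hq0 : 0 < q) (hq1 : q < 1) {a b : ℕ} (hab : a < b) :
    ∑' k, qWeight q (a + k) ≤ qComparison q * ∑ k ∈ Ico a b, qWeight q k := by
  have h1 : 0 < 1 - q := by linarith
  have h2 := one_sub_sq_pos hq0 hq1
  calc ∑' k, qWeight q (a + k) ≤ q ^ a / (1 - q) := tsum_qWeight_add_le hq0 hq1 a
    _ = qComparison q * ((1 - q ^ 2) * q ^ a) := by
        rw [qComparison]; field_simp
    _ ≤ qComparison q * ∑ k ∈ Ico a b, qWeight q k :=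
        mul_le_mul_of_nonneg_left (one_sub_sq_mul_pow_le_sum_Ico_qWeight hq0 hq1 hab)
          (zero_le_one.trans (one_le_qComparison hq0 hq1))

end Weight

section Truncation

variable {α E : Type*} [SeminormedAddCommGroup E]

lemma iSup_ofReal_norm_sub_div_le {S : Set α} {g : α → E} {d : α → α → ℝ} {B : ℝ}
    (h : ∀ x ∈ S, ∀ y ∈ S, 0 < d x y → ‖g x - g y‖ ≤ B * d x y) :
    (⨆ (x : α) (_ : x ∈ S) (y : α) (_ : y ∈ S) (_ : x ≠ y),
      ENNReal.ofReal (‖g x - g y‖ / d x y)) ≤ ENNReal.ofReal B := by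
  refine iSup₂_le fun x hx => iSup₂_le fun y hy => iSup_le fun _ => ?_
  rcases lt_or_ge 0 (d x y) with hxy | hxy
  · exact ENNReal.ofReal_le_ofReal ((div_le_iff₀ hxy).mpr (h x hx y hy hxy))
  · rw [ENNReal.ofReal_of_nonpos (div_nonpos_of_nonneg_of_nonpos (norm_nonneg _) hxy)]
    exact bot_le

lemma norm_sub_le_of_eq_zero_off {S T : Set α} {o : α} {f g : α → E} {d : α → α → ℝ}
    {C K : ℝ} (ho : o ∈ S) (hfo : f o = 0)
    (hf : ∀ x ∈ S, ∀ y ∈ S, ‖f x - f y‖ ≤ C * d x y) (hK : 1 ≤ K)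
    (hdo : ∀ x ∈ T, 0 ≤ d x o ∧ 0 ≤ d o x)
    (hdT : ∀ x ∈ T, ∀ y ∈ S, y ∉ T → d x o ≤ K * d x y ∧ d o x ≤ K * d y x)
    (hgT : ∀ x ∈ T, g x = f x) (hgS : ∀ x ∈ S, x ∉ T → g x = 0) :
    ∀ x ∈ S, ∀ y ∈ S, 0 < d x y → ‖g x - g y‖ ≤ max C 0 * K * d x y := by
  intro x hx y hy hxy
  have hC : 0 ≤ max C 0 := le_max_right _ _
  have hf' : ∀ x ∈ S, ∀ y ∈ S, 0 ≤ d x y → ‖f x - f y‖ ≤ max C 0 * d x y :=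
    fun x hx y hy h => (hf x hx y hy).trans (mul_le_mul_of_nonneg_right (le_max_left _ _) h)
  rw [mul_assoc]
  by_cases hxT : x ∈ T <;> by_cases hyT : y ∈ T
  · rw [hgT x hxT, hgT y hyT]
    exact (hf' x hx y hy hxy.le).trans
      (mul_le_mul_of_nonneg_left (le_mul_of_one_le_left hxy.le hK) hC)
  · rw [hgT x hxT, hgS y hy hyT, ← hfo]
    exact (hf' x hx o ho (hdo x hxT).1).trans
      (mul_le_mul_of_nonneg_left (hdT x hxT y hy hyT).1 hC)
  · rw [hgS x hx hxT, hgT y hyT, ← hfo]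
    exact (hf' o ho y hy (hdo y hyT).2).trans
      (mul_le_mul_of_nonneg_left (hdT y hyT x hx hxT).2 hC)
  · rw [hgS x hx hxT, hgS y hy hyT, sub_self, norm_zero]
    exact mul_nonneg hC (mul_nonneg (zero_le_one.trans hK) hxy.le)

end Truncation

/-- `d` agrees with `d_q` off the diagonal of `X_q`. -/
structure IsXqDist (q : ℝ) (d : ℝ → ℝ → ℝ) : Prop where
  pow_pow : ∀ n m : ℕ, n ≠ m →
    d (q ^ (2 * n)) (q ^ (2 * m)) = ∑ k ∈ Ico (min m n) (max m n), qWeight q k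
  pow_zero : ∀ n : ℕ, d (q ^ (2 * n)) 0 = ∑' k, qWeight q (n + k)
  zero_pow : ∀ n : ℕ, d 0 (q ^ (2 * n)) = ∑' k, qWeight q (n + k)

namespace IsXqDist

variable {q : ℝ} {d : ℝ → ℝ → ℝ}

lemma pow_zero_nonneg (hd : IsXqDist q d) (hq0 : 0 < q) (hq1 : q < 1) (n : ℕ) :
    0 ≤ d (q ^ (2 * n)) 0 :=
  hd.pow_zero n ▸ tsum_nonneg fun _ => (qWeight_pos hq0 hq1 _).le

lemma zero_pow_nonneg (hd : IsXqDist q d) (hq0 : 0 < q) (hq1 : q < 1) (n : ℕ) :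
    0 ≤ d 0 (q ^ (2 * n)) :=
  hd.zero_pow n ▸ tsum_nonneg fun _ => (qWeight_pos hq0 hq1 _).le

lemma pow_zero_le (hd : IsXqDist q d) (hq0 : 0 < q) (hq1 : q < 1) {j m : ℕ} (hjm : j < m) :
    d (q ^ (2 * j)) 0 ≤ qComparison q * d (q ^ (2 * j)) (q ^ (2 * m)) := by
  rw [hd.pow_zero, hd.pow_pow j m hjm.ne, min_eq_right hjm.le, max_eq_left hjm.le]
  exact tsum_qWeight_add_le_qComparison_mul hq0 hq1 hjm

lemma zero_pow_le (hd : IsXqDist q d) (hq0 : 0 < q) (hq1 : q < 1) {j m : ℕ} (hjm : j < m) :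
    d 0 (q ^ (2 * j)) ≤ qComparison q * d (q ^ (2 * m)) (q ^ (2 * j)) := by
  rw [hd.zero_pow, hd.pow_pow m j hjm.ne', min_eq_left hjm.le, max_eq_right hjm.le]
  exact tsum_qWeight_add_le_qComparison_mul hq0 hq1 hjm

lemma le_qComparison_mul_of_mem_XqUpTo (hd : IsXqDist q d) (hq0 : 0 < q) (hq1 : q < 1) {n : ℕ}
    {x y : ℝ} (hx : x ∈ XqUpTo q n) (hy : y ∈ Xq q) (hyn : y ∉ XqUpTo q n) :
    d x 0 ≤ qComparison q * d x y ∧ d 0 x ≤ qComparison q * d y x := by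
  obtain ⟨j, hjn, rfl⟩ := hx
  rcases hy with rfl | ⟨m, rfl⟩
  · exact ⟨le_mul_of_one_le_left (hd.pow_zero_nonneg hq0 hq1 j) (one_le_qComparison hq0 hq1),
      le_mul_of_one_le_left (hd.zero_pow_nonneg hq0 hq1 j) (one_le_qComparison hq0 hq1)⟩
  · have hjm : j < m := by
      by_contra! hmj
      exact hyn ⟨m, hmj.trans hjn, rfl⟩
    exact ⟨hd.pow_zero_le hq0 hq1 hjm, hd.zero_pow_le hq0 hq1 hjm⟩

end IsXqDist

theorem stmt_10_general (q : ℝ) (hq : q ∈ Set.Ioo (0 : ℝ) 1)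
    (d : ℝ → ℝ → ℝ)
    (hd_pow : ∀ n m : ℕ, n ≠ m →
      d (q ^ (2 * n)) (q ^ (2 * m)) =
        ∑ k ∈ Finset.Ico (min m n) (max m n),
          (1 - q ^ 2) * q ^ k / Real.sqrt (1 - q ^ (2 * (k + 1))))
    (hd_zero : ∀ n : ℕ,
      d (q ^ (2 * n)) 0 =
        ∑' k : ℕ, (1 - q ^ 2) * q ^ (n + k) / Real.sqrt (1 - q ^ (2 * (n + k + 1))))
    (hd_zero' : ∀ n : ℕ,
      d 0 (q ^ (2 * n)) =
        ∑' k : ℕ, (1 - q ^ 2) * q ^ (n + k) / Real.sqrt (1 - q ^ (2 * (n + k + 1))))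
    (f : ℝ → ℂ)
    (hf0 : f 0 = 0)
    (hf_lip : ∃ C : ℝ, ∀ x ∈ Xq q, ∀ y ∈ Xq q, ‖f x - f y‖ ≤ C * d x y)
    (fn : ℕ → ℝ → ℂ)
    (hfn : ∀ n k : ℕ, k ≤ n → fn n (q ^ (2 * k)) = f (q ^ (2 * k)))
    (hfn0 : ∀ n : ℕ, ∀ x ∈ Xq q, (¬ ∃ k : ℕ, k ≤ n ∧ x = q ^ (2 * k)) → fn n x = 0) :
    ∃ B : ℝ, ∀ n : ℕ,
      (⨆ (x : ℝ) (_ : x ∈ Xq q) (y : ℝ) (_ : y ∈ Xq q) (_ : x ≠ y),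
        ENNReal.ofReal (‖fn n x - fn n y‖ / d x y)) ≤ ENNReal.ofReal B := by
  obtain ⟨hq0, hq1⟩ := hq
  obtain ⟨C, hC⟩ := hf_lip
  have hd : IsXqDist q d := ⟨hd_pow, hd_zero, hd_zero'⟩
  refine ⟨max C 0 * qComparison q, fun n => iSup_ofReal_norm_sub_div_le ?_⟩
  refine norm_sub_le_of_eq_zero_off (T := XqUpTo q n) (Or.inl rfl) hf0 hC
    (one_le_qComparison hq0 hq1) ?_
    (fun _ hx _ hy hyn => hd.le_qComparison_mul_of_mem_XqUpTo hq0 hq1 hx hy hyn) ?_ (hfn0 n)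
  · rintro _ ⟨j, -, rfl⟩
    exact ⟨hd.pow_zero_nonneg hq0 hq1 j, hd.zero_pow_nonneg hq0 hq1 j⟩
  · rintro _ ⟨k, hk, rfl⟩
    exact hfn n k hk

/-- Let `q ∈ (0,1)` and let `f : X_q → ℂ` be continuous with `f(0) = 0` and Lipschitz with
respect to the metric `d_q` (specified by `hd_self`, `hd_pow`, `hd_zero`, `hd_zero'`).  For
`n ∈ ℕ₀` let `f_n` be the truncation of `f` given by `f_n(q^{2k}) = f(q^{2k})` for `k ≤ n` and
`f_n = 0` elsewhere on `X_q`.  Then the sequence of Lipschitz seminorms `{L_{d_q}(f_n)}_n`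
is bounded. -/
theorem stmt_10 (q : ℝ) (hq : q ∈ Set.Ioo (0 : ℝ) 1)
    (d : ℝ → ℝ → ℝ)
    (hd_self : ∀ x : ℝ, d x x = 0)
    (hd_pow : ∀ n m : ℕ, n ≠ m →
      d (q ^ (2 * n)) (q ^ (2 * m)) =
        ∑ k ∈ Finset.Ico (min m n) (max m n),
          (1 - q ^ 2) * q ^ k / Real.sqrt (1 - q ^ (2 * (k + 1))))
    (hd_zero : ∀ n : ℕ,
      d (q ^ (2 * n)) 0 =
        ∑' k : ℕ, (1 - q ^ 2) * q ^ (n + k) / Real.sqrt (1 - q ^ (2 * (n + k + 1))))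
    (hd_zero' : ∀ n : ℕ,
      d 0 (q ^ (2 * n)) =
        ∑' k : ℕ, (1 - q ^ 2) * q ^ (n + k) / Real.sqrt (1 - q ^ (2 * (n + k + 1))))
    (f : ℝ → ℂ)
    (hf0 : f 0 = 0)
    (hf_cont : ∀ x ∈ Xq q, ∀ ε > (0 : ℝ), ∃ δ > (0 : ℝ),
      ∀ y ∈ Xq q, d x y < δ → ‖f x - f y‖ < ε)
    (hf_lip : ∃ C : ℝ, ∀ x ∈ Xq q, ∀ y ∈ Xq q, ‖f x - f y‖ ≤ C * d x y)
    (fn : ℕ → ℝ → ℂ)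
    (hfn : ∀ n k : ℕ, k ≤ n → fn n (q ^ (2 * k)) = f (q ^ (2 * k)))
    (hfn0 : ∀ n : ℕ, ∀ x ∈ Xq q, (¬ ∃ k : ℕ, k ≤ n ∧ x = q ^ (2 * k)) → fn n x = 0) :
    ∃ B : ℝ, ∀ n : ℕ,
      (⨆ (x : ℝ) (_ : x ∈ Xq q) (y : ℝ) (_ : y ∈ Xq q) (_ : x ≠ y),
        ENNReal.ofReal (‖fn n x - fn n y‖ / d x y)) ≤ ENNReal.ofReal B :=
  stmt_10_general q hq d hd_pow hd_zero hd_zero' f hf0 hf_lip fn hfn hfn0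
end

section
/- Let q ∈ (0,1) and let f : X_q → ℂ be a function which vanishes at 0 and at all but finitely many points of X_q. Then for all m < n in ℕ₀ one has |f(q^{2m}) − f(q^{2n})| ≤ (max{ ρ_q(k) · |f(q^{2k}) − f(q^{2(k+1)})| : k ∈ ℕ₀ }) · d_q(q^{2m}, q^{2n}), and the Lipschitz seminorm of f with respect to d_q equals max{ ρ_q(k) · |f(q^{2k}) − f(q^{2(k+1)})| : k ∈ ℕ₀ }. -/
/-!
Write `g k = f(q^{2k})` and `M = max_k ρ_q(k)·‖g k − g (k+1)‖`, so that every step satisfies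
`‖g k − g (k+1)‖ ≤ M / ρ_q(k)`. Since `d_q` adds up the step lengths `1/ρ_q(k)` along the
chain `q^{2m}, q^{2(m+1)}, …`, telescoping gives `‖f x − f y‖ ≤ M · d_q(x, y)` between
powers, and, since `g` is eventually zero and `∑ 1/ρ_q(k)` converges, also between a power
and `0`. The bound is attained at the step `k₀` realising the maximum, which exists because
`g` is eventually zero.
-/

/-- `ρ_q(x) = √(1 − q^{2(x+1)}) / ((1−q²)·q^x)`, with real exponents interpreted via `rpow`. -/
noncomputable def rho (q x : ℝ) : ℝ :=
  Real.sqrt (1 - q ^ (2 * (x + 1))) / ((1 - q ^ 2) * q ^ x)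

open Filter Topology

theorem exists_forall_le_of_eventually_eq {α : Type*} [LinearOrder α] {c : ℕ → α} {a : α}
    (ha : ∀ k, a ≤ c k) (hc : ∀ᶠ k in atTop, c k = a) : ∃ k₀, ∀ k, c k ≤ c k₀ := by
  obtain ⟨N, hN⟩ := eventually_atTop.1 hc
  obtain ⟨k₀, -, hk₀⟩ := Finset.exists_max_image (Finset.range (N + 1)) c ⟨N, by simp⟩
  refine ⟨k₀, fun k => ?_⟩
  rcases lt_or_ge k (N + 1) with hk | hk
  · exact hk₀ k (Finset.mem_range.2 hk)
  · exact hN k (by omega) ▸ ha k₀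

section SteppedBound

variable {E : Type*} [SeminormedAddCommGroup E] {g : ℕ → E} {w : ℕ → ℝ} {M : ℝ}

theorem norm_sub_le_mul_sum_Ico_min_max (hg : ∀ k, ‖g k - g (k + 1)‖ ≤ M * w k) (m n : ℕ) :
    ‖g m - g n‖ ≤ M * ∑ k ∈ Finset.Ico (min n m) (max n m), w k := by
  wlog hmn : m ≤ n generalizing m n
  · rw [norm_sub_rev, min_comm, max_comm]
    exact this n m (by omega)
  rw [min_eq_right hmn, max_eq_left hmn, ← dist_eq_norm, Finset.mul_sum]
  exact dist_le_Ico_sum_of_dist_le hmn fun _ _ => (dist_eq_norm _ _).trans_le (hg _)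

theorem norm_le_mul_tsum_of_tendsto_zero (hg : ∀ k, ‖g k - g (k + 1)‖ ≤ M * w k)
    (hw : Summable w) (hg0 : Tendsto g atTop (𝓝 0)) (n : ℕ) :
    ‖g n‖ ≤ M * ∑' k, w (n + k) := by
  simpa only [dist_zero_right, tsum_mul_left] using
    dist_le_tsum_of_dist_le_of_tendsto (fun k => M * w k)
      (fun k => (dist_eq_norm _ _).trans_le (hg k)) (hw.mul_left M) hg0 n

end SteppedBound

section QGrid

variable {q : ℝ}

theorem rho_natCast (q : ℝ) (k : ℕ) :
    rho q k = √(1 - q ^ (2 * (k + 1))) / ((1 - q ^ 2) * q ^ k) := by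
  unfold rho
  norm_cast

theorem inv_rho_natCast (q : ℝ) (k : ℕ) :
    (rho q k)⁻¹ = (1 - q ^ 2) * q ^ k / √(1 - q ^ (2 * (k + 1))) := by
  rw [rho_natCast, inv_div]

theorem rho_natCast_pos (hq : q ∈ Set.Ioo (0 : ℝ) 1) (k : ℕ) : 0 < rho q k := by
  obtain ⟨hq0, hq1⟩ := hq
  have hpow : q ^ (2 * (k + 1)) < 1 := pow_lt_one₀ hq0.le hq1 (by omega)
  have hq2 : q ^ 2 < 1 := pow_lt_one₀ hq0.le hq1 (by omega)
  rw [rho_natCast]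
  exact div_pos (Real.sqrt_pos.2 (by linarith)) (mul_pos (by linarith) (pow_pos hq0 k))

theorem summable_inv_rho_natCast (hq : q ∈ Set.Ioo (0 : ℝ) 1) :
    Summable fun k : ℕ => (rho q k)⁻¹ := by
  obtain ⟨hq0, hq1⟩ := hq
  have hq2 : q ^ 2 < 1 := pow_lt_one₀ hq0.le hq1 (by omega)
  refine Summable.of_nonneg_of_le (fun k => (inv_pos.2 (rho_natCast_pos ⟨hq0, hq1⟩ k)).le)
    (fun k => ?_)
    (((summable_geometric_of_lt_one hq0.le hq1).mul_left (1 - q ^ 2)).div_const √(1 - q ^ 2))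
  have hpow : q ^ (2 * (k + 1)) ≤ q ^ 2 := pow_le_pow_of_le_one hq0.le hq1.le (by omega)
  rw [inv_rho_natCast]
  exact div_le_div_of_nonneg_left (mul_nonneg (by linarith) (pow_pos hq0 k).le)
    (Real.sqrt_pos.2 (by linarith)) (Real.sqrt_le_sqrt (by linarith))

theorem pow_two_mul_injective (hq : q ∈ Set.Ioo (0 : ℝ) 1) :
    Function.Injective fun k : ℕ => q ^ (2 * k) :=
  (pow_right_injective₀ hq.1 hq.2.ne).comp (mul_right_injective₀ two_ne_zero)

theorem eventually_eq_zero_comp_pow_of_finite (hq : q ∈ Set.Ioo (0 : ℝ) 1) {f : ℝ → ℂ}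
    (hfin : {x : ℝ | x ∈ Xq q ∧ f x ≠ 0}.Finite) : ∀ᶠ k in atTop, f (q ^ (2 * k)) = 0 := by
  have hsupp : {k : ℕ | f (q ^ (2 * k)) ≠ 0}.Finite :=
    (hfin.preimage (pow_two_mul_injective hq).injOn).subset
      fun k hk => ⟨Or.inr ⟨k, rfl⟩, hk⟩
  rw [← Nat.cofinite_eq_atTop]
  filter_upwards [hsupp.eventually_cofinite_notMem] with k hk
  simpa using hk

theorem norm_sub_div_le_of_norm_sub_succ_le (hq : q ∈ Set.Ioo (0 : ℝ) 1) {d : ℝ → ℝ → ℝ}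
    (hd_pow : ∀ n m : ℕ, n ≠ m →
      d (q ^ (2 * n)) (q ^ (2 * m)) = ∑ k ∈ Finset.Ico (min m n) (max m n), (rho q k)⁻¹)
    (hd_zero : ∀ n : ℕ, d (q ^ (2 * n)) 0 = ∑' k : ℕ, (rho q (n + k : ℕ))⁻¹)
    (hd_zero' : ∀ n : ℕ, d 0 (q ^ (2 * n)) = ∑' k : ℕ, (rho q (n + k : ℕ))⁻¹)
    {f : ℝ → ℂ} (hf0 : f 0 = 0) (hg0 : ∀ᶠ k in atTop, f (q ^ (2 * k)) = 0) {M : ℝ}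
    (hstep : ∀ k : ℕ, ‖f (q ^ (2 * k)) - f (q ^ (2 * (k + 1)))‖ ≤ M * (rho q k)⁻¹)
    {x y : ℝ} (hx : x ∈ Xq q) (hy : y ∈ Xq q) (hxy : x ≠ y) : ‖f x - f y‖ / d x y ≤ M := by
  have hw_pos (k : ℕ) : 0 < (rho q k)⁻¹ := inv_pos.2 (rho_natCast_pos hq k)
  have hM0 : 0 ≤ M :=
    (mul_nonneg_iff_of_pos_right (hw_pos 0)).1 ((norm_nonneg _).trans (hstep 0))
  have hpair := norm_sub_le_mul_sum_Ico_min_max hstep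
  have htail := norm_le_mul_tsum_of_tendsto_zero hstep (summable_inv_rho_natCast hq)
    (tendsto_const_nhds.congr' (EventuallyEq.symm hg0))
  rcases hx with rfl | ⟨m, rfl⟩ <;> rcases hy with rfl | ⟨n, rfl⟩
  · exact absurd rfl hxy
  · rw [hd_zero' n, hf0, zero_sub, norm_neg]
    exact div_le_of_le_mul₀ (tsum_nonneg fun _ => (hw_pos _).le) hM0 (htail n)
  · rw [hd_zero m, hf0, sub_zero]
    exact div_le_of_le_mul₀ (tsum_nonneg fun _ => (hw_pos _).le) hM0 (htail m)
  · rw [hd_pow m n (by rintro rfl; exact hxy rfl)]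
    exact div_le_of_le_mul₀ (Finset.sum_nonneg fun _ _ => (hw_pos _).le) hM0 (hpair m n)

end QGrid

theorem stmt_11_general (q : ℝ) (hq : q ∈ Set.Ioo (0 : ℝ) 1)
    (d : ℝ → ℝ → ℝ)
    (hd_pow : ∀ n m : ℕ, n ≠ m →
      d (q ^ (2 * n)) (q ^ (2 * m)) =
        ∑ k ∈ Finset.Ico (min m n) (max m n),
          (1 - q ^ 2) * q ^ k / Real.sqrt (1 - q ^ (2 * (k + 1))))
    (hd_zero : ∀ n : ℕ,
      d (q ^ (2 * n)) 0 =
        ∑' k : ℕ, (1 - q ^ 2) * q ^ (n + k) / Real.sqrt (1 - q ^ (2 * (n + k + 1))))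
    (hd_zero' : ∀ n : ℕ,
      d 0 (q ^ (2 * n)) =
        ∑' k : ℕ, (1 - q ^ 2) * q ^ (n + k) / Real.sqrt (1 - q ^ (2 * (n + k + 1))))
    (f : ℝ → ℂ)
    (hf0 : f 0 = 0)
    (hfin : {x : ℝ | x ∈ Xq q ∧ f x ≠ 0}.Finite) :
    (∀ m n : ℕ, m < n →
      ‖f (q ^ (2 * m)) - f (q ^ (2 * n))‖ ≤
        (⨆ k : ℕ, rho q k * ‖f (q ^ (2 * k)) - f (q ^ (2 * (k + 1)))‖) *
          d (q ^ (2 * m)) (q ^ (2 * n))) ∧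
    (⨆ (x : ℝ) (_ : x ∈ Xq q) (y : ℝ) (_ : y ∈ Xq q) (_ : x ≠ y),
        ENNReal.ofReal (‖f x - f y‖ / d x y)) =
      ENNReal.ofReal
        (⨆ k : ℕ, rho q k * ‖f (q ^ (2 * k)) - f (q ^ (2 * (k + 1)))‖) := by
  simp only [← inv_rho_natCast] at hd_pow hd_zero hd_zero'
  set g : ℕ → ℂ := fun k => f (q ^ (2 * k))
  set c : ℕ → ℝ := fun k => rho q k * ‖g k - g (k + 1)‖
  have hg0 : ∀ᶠ k in atTop, g k = 0 := eventually_eq_zero_comp_pow_of_finite hq hfin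
  obtain ⟨k₀, hk₀⟩ : ∃ k₀, ∀ k, c k ≤ c k₀ :=
    exists_forall_le_of_eventually_eq
      (fun k => mul_nonneg (rho_natCast_pos hq k).le (norm_nonneg _))
      (by
        filter_upwards [hg0, (tendsto_add_atTop_nat 1).eventually hg0] with k hk hk1
        simp [c, hk, hk1])
  rw [show ⨆ k, c k = c k₀ from
    le_antisymm (ciSup_le hk₀) (le_ciSup ⟨c k₀, by simpa [upperBounds]⟩ k₀)]
  have hstep (k : ℕ) : ‖g k - g (k + 1)‖ ≤ c k₀ * (rho q k)⁻¹ := by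
    rw [← div_eq_mul_inv, le_div_iff₀ (rho_natCast_pos hq k), mul_comm]
    exact hk₀ k
  refine ⟨fun m n hmn => hd_pow m n hmn.ne ▸ norm_sub_le_mul_sum_Ico_min_max hstep m n,
    le_antisymm ?_ ?_⟩
  · simp only [iSup_le_iff]
    exact fun x hx y hy hxy => ENNReal.ofReal_le_ofReal <|
      norm_sub_div_le_of_norm_sub_succ_le hq hd_pow hd_zero hd_zero' hf0 hg0 hstep hx hy hxy
  · have hxy : q ^ (2 * k₀) ≠ q ^ (2 * (k₀ + 1)) := (pow_two_mul_injective hq).ne (by omega)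
    refine le_iSup₂_of_le (q ^ (2 * k₀)) (Or.inr ⟨k₀, rfl⟩)
      (le_iSup₂_of_le (q ^ (2 * (k₀ + 1))) (Or.inr ⟨k₀ + 1, rfl⟩) (le_iSup_of_le hxy ?_))
    rw [hd_pow k₀ (k₀ + 1) (by omega)]
    simp [c, g, div_inv_eq_mul, mul_comm]

/-- Let `q ∈ (0,1)` and let `f : X_q → ℂ` vanish at `0` and at all but finitely many points of
`X_q`.  Then for all `m < n` one has
`|f(q^{2m}) − f(q^{2n})| ≤ (max_k ρ_q(k)·|f(q^{2k}) − f(q^{2(k+1)})|)·d_q(q^{2m}, q^{2n})`,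
and the Lipschitz seminorm of `f` with respect to `d_q` equals
`max_k ρ_q(k)·|f(q^{2k}) − f(q^{2(k+1)})|` (the supremum being attained). -/
theorem stmt_11 (q : ℝ) (hq : q ∈ Set.Ioo (0 : ℝ) 1)
    (d : ℝ → ℝ → ℝ)
    (hd_self : ∀ x : ℝ, d x x = 0)
    (hd_pow : ∀ n m : ℕ, n ≠ m →
      d (q ^ (2 * n)) (q ^ (2 * m)) =
        ∑ k ∈ Finset.Ico (min m n) (max m n),
          (1 - q ^ 2) * q ^ k / Real.sqrt (1 - q ^ (2 * (k + 1))))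
    (hd_zero : ∀ n : ℕ,
      d (q ^ (2 * n)) 0 =
        ∑' k : ℕ, (1 - q ^ 2) * q ^ (n + k) / Real.sqrt (1 - q ^ (2 * (n + k + 1))))
    (hd_zero' : ∀ n : ℕ,
      d 0 (q ^ (2 * n)) =
        ∑' k : ℕ, (1 - q ^ 2) * q ^ (n + k) / Real.sqrt (1 - q ^ (2 * (n + k + 1))))
    (f : ℝ → ℂ)
    (hf0 : f 0 = 0)
    (hfin : {x : ℝ | x ∈ Xq q ∧ f x ≠ 0}.Finite) :
    (∀ m n : ℕ, m < n →
      ‖f (q ^ (2 * m)) - f (q ^ (2 * n))‖ ≤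
        (⨆ k : ℕ, rho q k * ‖f (q ^ (2 * k)) - f (q ^ (2 * (k + 1)))‖) *
          d (q ^ (2 * m)) (q ^ (2 * n))) ∧
    (⨆ (x : ℝ) (_ : x ∈ Xq q) (y : ℝ) (_ : y ∈ Xq q) (_ : x ≠ y),
        ENNReal.ofReal (‖f x - f y‖ / d x y)) =
      ENNReal.ofReal
        (⨆ k : ℕ, rho q k * ‖f (q ^ (2 * k)) - f (q ^ (2 * (k + 1)))‖) :=
  stmt_11_general q hq d hd_pow hd_zero hd_zero' f hf0 hfin
end

section
/- For every q ∈ (0,1), the map ι_q : X_q → ℝ given by ι_q(x) = d_q(1, x) − π/2 is an isometric embedding of the metric space (X_q, d_q) into ℝ with its standard metric; that is, |ι_q(x) − ι_q(y)| = d_q(x,y) for all x, y ∈ X_q. -/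
open Finset

section OrderedGroup

variable {α : Type*} [AddCommGroup α] [LinearOrder α] [IsOrderedAddMonoid α]
  {f : ℕ → α}

theorem abs_sum_range_sub_sum_range (hf : ∀ k, 0 ≤ f k) (n m : ℕ) :
    |∑ k ∈ range n, f k - ∑ k ∈ range m, f k| = ∑ k ∈ Ico (min m n) (max m n), f k := by
  wlog h : m ≤ n generalizing m n
  · rw [abs_sub_comm, min_comm, max_comm]
    exact this m n (le_of_not_ge h)
  rw [min_eq_left h, max_eq_right h, ← sum_Ico_eq_sub _ h,
    abs_of_nonneg (sum_nonneg fun k _ => hf k)]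

theorem abs_tsum_sub_sum_range [TopologicalSpace α] [OrderClosedTopology α]
    [IsTopologicalAddGroup α] (hf : ∀ k, 0 ≤ f k) (hs : Summable f) (n : ℕ) :
    |∑' k, f k - ∑ k ∈ range n, f k| = ∑' k, f (n + k) := by
  rw [← hs.sum_add_tsum_nat_add n, add_sub_cancel_left,
    abs_of_nonneg (tsum_nonneg fun k => hf _)]
  simp only [add_comm]

end OrderedGroup

theorem summable_mul_pow_div_sqrt {q : ℝ} (hq0 : 0 ≤ q) (hq1 : q < 1) :
    Summable fun k : ℕ => (1 - q ^ 2) * q ^ k / √(1 - q ^ (2 * (k + 1))) := by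
  have hq2 : 0 ≤ 1 - q ^ 2 := by nlinarith
  refine (summable_geometric_of_lt_one hq0 hq1).of_nonneg_of_le
    (fun k => by positivity) fun k => ?_
  have hqk : q ^ (2 * (k + 1)) ≤ q ^ 2 := pow_le_pow_of_le_one hq0 hq1.le (by omega)
  have hqk0 : 0 ≤ q ^ (2 * (k + 1)) := by positivity
  -- each term is at most `q ^ k`: `1 - q ^ 2 ≤ 1 - q ^ (2 * (k + 1)) ≤ √(1 - q ^ (2 * (k + 1)))`
  have h : 1 - q ^ 2 ≤ √(1 - q ^ (2 * (k + 1))) := by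
    rw [Real.le_sqrt hq2 (by linarith)]
    nlinarith
  rw [mul_comm]
  exact div_le_of_le_mul₀ (Real.sqrt_nonneg _) (by positivity)
    (mul_le_mul_of_nonneg_left h (by positivity))

/-- For every `q ∈ (0,1)`, the map `ι_q : X_q → ℝ`, `ι_q(x) = d_q(1,x) − π/2`, is an isometric
embedding of `(X_q, d_q)` into `ℝ` with its standard metric:
`|ι_q(x) − ι_q(y)| = d_q(x,y)` for all `x, y ∈ X_q`.  Here `d_q` is specified by the
hypotheses `hd_self`, `hd_pow`, `hd_zero`, `hd_zero'`, and `1 = q^0 ∈ X_q`. -/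
theorem stmt_12 (q : ℝ) (hq : q ∈ Set.Ioo (0 : ℝ) 1)
    (d : ℝ → ℝ → ℝ)
    (hd_self : ∀ x : ℝ, d x x = 0)
    (hd_pow : ∀ n m : ℕ, n ≠ m →
      d (q ^ (2 * n)) (q ^ (2 * m)) =
        ∑ k ∈ Finset.Ico (min m n) (max m n),
          (1 - q ^ 2) * q ^ k / Real.sqrt (1 - q ^ (2 * (k + 1))))
    (hd_zero : ∀ n : ℕ,
      d (q ^ (2 * n)) 0 =
        ∑' k : ℕ, (1 - q ^ 2) * q ^ (n + k) / Real.sqrt (1 - q ^ (2 * (n + k + 1))))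
    (hd_zero' : ∀ n : ℕ,
      d 0 (q ^ (2 * n)) =
        ∑' k : ℕ, (1 - q ^ 2) * q ^ (n + k) / Real.sqrt (1 - q ^ (2 * (n + k + 1))))  :
    ∀ x ∈ Xq q, ∀ y ∈ Xq q,
      |(d 1 x - Real.pi / 2) - (d 1 y - Real.pi / 2)| = d x y := by
  set f : ℕ → ℝ := fun k => (1 - q ^ 2) * q ^ k / √(1 - q ^ (2 * (k + 1)))
  have hf_nonneg (k : ℕ) : 0 ≤ f k := by
    have : 0 ≤ 1 - q ^ 2 := by nlinarith [hq.1, hq.2]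
    exact div_nonneg (mul_nonneg this (pow_nonneg hq.1.le k)) (Real.sqrt_nonneg _)
  have hf_summable : Summable f := summable_mul_pow_div_sqrt hq.1.le hq.2
  have hd_one_pow (n : ℕ) : d 1 (q ^ (2 * n)) = ∑ k ∈ range n, f k := by
    rcases eq_or_ne n 0 with rfl | hn
    · simp [hd_self]
    · simpa [← range_eq_Ico] using hd_pow 0 n hn.symm
  have hd_one_zero : d 1 0 = ∑' k, f k := by simpa using hd_zero 0
  rintro x (rfl | ⟨n, rfl⟩) y (rfl | ⟨m, rfl⟩) <;> rw [sub_sub_sub_cancel_right]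
  · simp [hd_self]
  · rw [hd_zero' m, hd_one_zero, hd_one_pow, abs_tsum_sub_sum_range hf_nonneg hf_summable]
  · rw [hd_zero n, hd_one_zero, hd_one_pow, abs_sub_comm,
      abs_tsum_sub_sum_range hf_nonneg hf_summable]
  · rcases eq_or_ne n m with rfl | hnm
    · simp [hd_self]
    · rw [hd_pow n m hnm, hd_one_pow, hd_one_pow, abs_sum_range_sub_sum_range hf_nonneg]
end

section
/- The map q ↦ (X_q, d_q) from (0,1) to the space of (isometry classes of) nonempty compact metric spaces is continuous with respect to the Gromov–Hausdorff distance: for every q₀ ∈ (0,1) and ε > 0 there is δ > 0 such that for all q ∈ (0,1) with |q − q₀| < δ, the Gromov–Hausdorff distance between (X_q, d_q) and (X_{q₀}, d_{q₀}) is less than ε. -/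
/-!
Index `X_q` by `ℕ∞`, with `n ↦ q^{2n}` and `⊤ ↦ 0`. Then `z ↦ ∑_{k ≥ z} 1/ρ_q(k)` embeds `X_q`
isometrically into `ℝ`, so matching points of `X_q` and `X_{q₀}` with the same index distorts
distances by at most `2 ∑_k |1/ρ_q(k) - 1/ρ_{q₀}(k)|`, and the Gromov–Hausdorff distance is at most
this `ℓ¹` distance. It tends to `0` as `q → q₀` by dominated convergence, since
`|1/ρ_q(k)| ≤ |q|^k`.
-/

open Filter Topology Function

namespace GromovHausdorff

variable {X Y : Type*} [MetricSpace X] [CompactSpace X] [Nonempty X]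
  [MetricSpace Y] [CompactSpace Y] [Nonempty Y]

theorem ghDist_le_of_surjective {Φ : X → Y} (hΦ : Surjective Φ) {ε : ℝ}
    (H : ∀ x y, |dist x y - dist (Φ x) (Φ y)| ≤ ε) : ghDist X Y ≤ ε / 2 := by
  have h := ghDist_le_of_approx_subsets (s := Set.univ) (ε₁ := 0) (ε₃ := 0) (fun x => Φ x)
    (fun x => ⟨x, Set.mem_univ x, (dist_self x).le⟩)
    (fun y => ⟨⟨(hΦ y).choose, Set.mem_univ _⟩, by rw [(hΦ y).choose_spec, dist_self]⟩)
    (fun x y => H x y)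
  linarith

theorem ghDist_le_of_dist_eq_abs_sub {Z : Type*} (f : Z ≃ X) {g : Z → Y} (hg : Surjective g)
    {u v : Z → ℝ} (hu : ∀ z w, dist (f z) (f w) = |u z - u w|)
    (hv : ∀ z w, dist (g z) (g w) = |v z - v w|) {C : ℝ} (huv : ∀ z, |u z - v z| ≤ C) :
    ghDist X Y ≤ C := by
  have hdist : ∀ z w, |dist (f z) (f w) - dist (g z) (g w)| ≤ 2 * C := fun z w => by
    rw [hu, hv]
    calc |(|u z - u w| - |v z - v w|)| ≤ |(u z - u w) - (v z - v w)| :=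
          abs_abs_sub_abs_le_abs_sub _ _
      _ = |(u z - v z) - (u w - v w)| := by congr 1; ring
      _ ≤ |u z - v z| + |u w - v w| := abs_sub _ _
      _ ≤ 2 * C := by linarith [huv z, huv w]
  have h := ghDist_le_of_surjective (hg.comp f.symm.surjective) fun x y => by
    simpa using hdist (f.symm x) (f.symm y)
  linarith

end GromovHausdorff

noncomputable def tailSum (a : ℕ → ℝ) : ℕ∞ → ℝ
  | ⊤ => 0
  | (n : ℕ) => ∑' k, a (n + k)

@[simp] theorem tailSum_top (a : ℕ → ℝ) : tailSum a ⊤ = 0 := rfl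

@[simp] theorem tailSum_coe (a : ℕ → ℝ) (n : ℕ) : tailSum a n = ∑' k, a (n + k) := rfl

section tailSum

variable {a b : ℕ → ℝ}

theorem Summable.nat_add_left (ha : Summable a) (n : ℕ) : Summable fun k => a (n + k) :=
  ha.comp_injective (add_right_injective n)

theorem tailSum_nonneg (ha : ∀ k, 0 ≤ a k) (z : ℕ∞) : 0 ≤ tailSum a z := by
  induction z using ENat.recTopCoe with
  | top => simp
  | coe n => simpa using tsum_nonneg fun k => ha (n + k)

theorem sum_Ico_eq_tailSum_sub (ha : Summable a) {n m : ℕ} (hnm : n ≤ m) :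
    ∑ k ∈ Finset.Ico n m, a k = tailSum a n - tailSum a m := by
  have hsplit := (ha.nat_add_left n).sum_add_tsum_nat_add (m - n)
  have hshift : ∀ i, n + (i + (m - n)) = m + i := by omega
  simp only [hshift] at hsplit
  rw [tailSum_coe, tailSum_coe, ← hsplit, Finset.sum_Ico_eq_sum_range]
  ring

theorem abs_tailSum_sub_le (ha : Summable a) (hb : Summable b) (z : ℕ∞) :
    |tailSum a z - tailSum b z| ≤ ∑' k, |a k - b k| := by
  have hab : Summable fun k => |a k - b k| := (ha.sub hb).abs
  induction z using ENat.recTopCoe with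
  | top => simpa using tsum_nonneg fun k => abs_nonneg (a k - b k)
  | coe n =>
    calc |tailSum a n - tailSum b n| = |∑' k, (a (n + k) - b (n + k))| := by
          rw [tailSum_coe, tailSum_coe,
            (ha.nat_add_left n).tsum_sub (hb.nat_add_left n)]
      _ ≤ ∑' k, |a (n + k) - b (n + k)| := by
          simpa only [Real.norm_eq_abs] using
            norm_tsum_le_tsum_norm (f := fun k => a (n + k) - b (n + k))
              (by simpa only [Real.norm_eq_abs] using hab.nat_add_left n)
      _ ≤ ∑' k, |a k - b k| :=
          (hab.nat_add_left n).tsum_le_tsum_of_inj _ (add_right_injective n)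
            (fun _ _ => abs_nonneg _) (fun _ => le_rfl) hab

theorem dist_eq_abs_tailSum_sub {X : Type*} [MetricSpace X] (ha0 : ∀ k, 0 ≤ a k)
    (ha : Summable a) {f : ℕ∞ → X}
    (hfin : ∀ n m : ℕ, n ≠ m → dist (f n) (f m) = ∑ k ∈ Finset.Ico (min m n) (max m n), a k)
    (htop : ∀ n : ℕ, dist (f n) (f ⊤) = tailSum a n) (z w : ℕ∞) :
    dist (f z) (f w) = |tailSum a z - tailSum a w| := by
  have htail := tailSum_nonneg ha0
  have hIco : ∀ {n m : ℕ}, n ≤ m → ∑ k ∈ Finset.Ico n m, a k = |tailSum a n - tailSum a m| :=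
    fun hnm => by
      rw [← sum_Ico_eq_tailSum_sub ha hnm, abs_of_nonneg (Finset.sum_nonneg fun k _ => ha0 k)]
  induction z using ENat.recTopCoe <;> induction w using ENat.recTopCoe
  case top.top => simp
  case top.coe m => rw [dist_comm, htop, tailSum_top, zero_sub, abs_neg, abs_of_nonneg (htail _)]
  case coe.top n => rw [htop, tailSum_top, sub_zero, abs_of_nonneg (htail _)]
  case coe.coe n m =>
    rcases eq_or_ne n m with rfl | hnm
    · simp
    rw [hfin n m hnm]
    rcases le_total n m with hle | hle
    · rw [min_eq_right hle, max_eq_left hle, hIco hle]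
    · rw [min_eq_left hle, max_eq_right hle, hIco hle, abs_sub_comm]

end tailSum

/-- `invRho q k = 1 / ρ_q(k) = d_q(q^{2k}, q^{2(k+1)})`. -/
noncomputable def invRho (q : ℝ) (k : ℕ) : ℝ :=
  (1 - q ^ 2) * q ^ k / Real.sqrt (1 - q ^ (2 * (k + 1)))

section invRho

variable {q : ℝ}

theorem invRho_nonneg (h0 : 0 ≤ q) (h1 : q ≤ 1) (k : ℕ) : 0 ≤ invRho q k := by
  have : q ^ 2 ≤ 1 := pow_le_one₀ h0 h1
  unfold invRho
  have := pow_nonneg h0 k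
  positivity

theorem abs_invRho_le (h : |q| ≤ 1) (k : ℕ) : |invRho q k| ≤ |q| ^ k := by
  have hq2 : q ^ 2 ≤ 1 := by rwa [sq_le_one_iff_abs_le_one]
  have hpow : q ^ (2 * (k + 1)) ≤ q ^ 2 := by
    rw [pow_mul]
    exact pow_le_of_le_one (sq_nonneg q) hq2 (Nat.succ_ne_zero k)
  have hsqrt : 1 - q ^ 2 ≤ Real.sqrt (1 - q ^ (2 * (k + 1))) := by
    have : 0 ≤ q ^ (2 * (k + 1)) := by rw [pow_mul]; positivity
    calc 1 - q ^ 2 ≤ 1 - q ^ (2 * (k + 1)) := by linarith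
      _ ≤ Real.sqrt (1 - q ^ (2 * (k + 1))) := Real.le_sqrt_of_sq_le (by nlinarith)
  rw [invRho, abs_div, abs_mul, abs_pow, abs_of_nonneg (sub_nonneg.2 hq2),
    abs_of_nonneg (Real.sqrt_nonneg _)]
  refine div_le_of_le_mul₀ (Real.sqrt_nonneg _) (by positivity) ?_
  rw [mul_comm]
  exact mul_le_mul_of_nonneg_left hsqrt (by positivity)

theorem summable_invRho (h : |q| < 1) : Summable (invRho q) :=
  .of_norm_bounded (summable_geometric_of_lt_one (abs_nonneg q) h) (abs_invRho_le h.le)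

theorem continuousAt_invRho (h : |q| < 1) (k : ℕ) : ContinuousAt (invRho · k) q := by
  have : q ^ (2 * (k + 1)) < 1 := by
    rw [pow_mul]
    exact pow_lt_one₀ (sq_nonneg q) (by rwa [sq_lt_one_iff_abs_lt_one]) (Nat.succ_ne_zero k)
  unfold invRho
  exact ContinuousAt.div (by fun_prop) (by fun_prop)
    (Real.sqrt_ne_zero'.2 (sub_pos.2 this))

theorem tendsto_tsum_abs_invRho_sub (h : |q| < 1) :
    Tendsto (fun p => ∑' k, |invRho p k - invRho q k|) (𝓝 q) (𝓝 0) := by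
  obtain ⟨r, hr, hr1⟩ := exists_between h
  have hnear : ∀ᶠ p in 𝓝 q, |p| < r := (continuous_abs.tendsto q).eventually (gt_mem_nhds hr)
  have hbound : ∀ p, |p| < r → ∀ k, ‖|invRho p k - invRho q k|‖ ≤ 2 * r ^ k := by
    intro p hp k
    rw [Real.norm_eq_abs, abs_abs]
    have hp' := pow_le_pow_left₀ (abs_nonneg p) hp.le k
    have hq' := pow_le_pow_left₀ (abs_nonneg q) hr.le k
    linarith [abs_sub (invRho p k) (invRho q k), abs_invRho_le (hp.trans hr1).le k,
      abs_invRho_le h.le k]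
  have hlim := tendsto_tsum_of_dominated_convergence
    ((summable_geometric_of_lt_one ((abs_nonneg q).trans hr.le) hr1).mul_left 2)
    (fun k => by simpa using ((continuousAt_invRho h k).sub continuousAt_const).abs.tendsto)
    (hnear.mono fun p hp => hbound p hp)
  simpa using hlim

end invRho

namespace Xq

def point (q : ℝ) : ℕ∞ → Xq q
  | ⊤ => ⟨0, Or.inl rfl⟩
  | (n : ℕ) => ⟨q ^ (2 * n), Or.inr ⟨n, rfl⟩⟩

theorem point_surjective (q : ℝ) : Surjective (point q) := by
  rintro ⟨x, rfl | ⟨n, rfl⟩⟩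
  exacts [⟨⊤, rfl⟩, ⟨n, rfl⟩]

theorem point_injective {q : ℝ} (h0 : 0 < q) (h1 : q < 1) : Injective (point q) := by
  have hpos : ∀ n : ℕ, (point q n : ℝ) ≠ point q ⊤ := fun n => (pow_pos h0 _).ne'
  have hinj : Injective fun n : ℕ => (q ^ 2) ^ n :=
    pow_right_injective₀ (by positivity) (by nlinarith)
  intro z w hzw
  induction z using ENat.recTopCoe <;> induction w using ENat.recTopCoe
  case top.top => rfl
  case top.coe m => exact absurd (congrArg Subtype.val hzw).symm (hpos m)
  case coe.top n => exact absurd (congrArg Subtype.val hzw) (hpos n)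
  case coe.coe n m =>
    have : (q ^ 2) ^ n = (q ^ 2) ^ m := by simpa [point, pow_mul] using congrArg Subtype.val hzw
    rw [hinj this]

end Xq

/-- The map `q ↦ (X_q, d_q)` is continuous on `(0,1)` with respect to the Gromov–Hausdorff
distance: for every `q₀ ∈ (0,1)` and `ε > 0` there is `δ > 0` such that for every
`q ∈ (0,1)` with `|q − q₀| < δ`, the Gromov–Hausdorff distance between `(X_q, d_q)` and
`(X_{q₀}, d_{q₀})` is less than `ε`.  Here, for each `q`, `M q` is a compact metric space
structure on `X_q` whose distance function, for `q ∈ (0,1)`, is the metric `d_q` (hypotheses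
`hM_pow` and `hM_zero`; the remaining values of `d_q` are determined by symmetry and
`d_q(x,x) = 0`). -/
theorem stmt_13
    (M : ∀ q : ℝ, MetricSpace (Xq q))
    (hne : ∀ q : ℝ, Nonempty (Xq q))
    (hcpt : ∀ q : ℝ,
      @CompactSpace (Xq q) (M q).toPseudoMetricSpace.toUniformSpace.toTopologicalSpace)
    (hM_pow : ∀ q ∈ Set.Ioo (0 : ℝ) 1, ∀ (x y : Xq q) (n m : ℕ), n ≠ m →
      (x : ℝ) = q ^ (2 * n) → (y : ℝ) = q ^ (2 * m) →
      @dist _ (M q).toPseudoMetricSpace.toDist x y =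
        ∑ k ∈ Finset.Ico (min m n) (max m n),
          (1 - q ^ 2) * q ^ k / Real.sqrt (1 - q ^ (2 * (k + 1))))
    (hM_zero : ∀ q ∈ Set.Ioo (0 : ℝ) 1, ∀ (x y : Xq q) (n : ℕ),
      (x : ℝ) = q ^ (2 * n) → (y : ℝ) = 0 →
      @dist _ (M q).toPseudoMetricSpace.toDist x y =
        ∑' k : ℕ, (1 - q ^ 2) * q ^ (n + k) / Real.sqrt (1 - q ^ (2 * (n + k + 1)))) :
    ∀ q₀ ∈ Set.Ioo (0 : ℝ) 1, ∀ ε > (0 : ℝ), ∃ δ > (0 : ℝ),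
      ∀ q ∈ Set.Ioo (0 : ℝ) 1, |q - q₀| < δ →
        @GromovHausdorff.ghDist (Xq q) (Xq q₀)
          (M q) (hne q) (hcpt q) (M q₀) (hne q₀) (hcpt q₀) < ε := by
  have habs : ∀ p ∈ Set.Ioo (0 : ℝ) 1, |p| < 1 := fun p hp => abs_lt.2 ⟨by linarith [hp.1], hp.2⟩
  have hdist : ∀ p ∈ Set.Ioo (0 : ℝ) 1, ∀ z w, @dist _ (M p).toDist (Xq.point p z) (Xq.point p w) =
      |tailSum (invRho p) z - tailSum (invRho p) w| := fun p hp =>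
    let := M p
    dist_eq_abs_tailSum_sub (invRho_nonneg hp.1.le hp.2.le) (summable_invRho (habs p hp))
      (fun n m hnm => hM_pow p hp _ _ n m hnm rfl rfl) (fun n => hM_zero p hp _ _ n rfl rfl)
  intro q₀ hq₀ ε hε
  obtain ⟨δ, hδ, hclose⟩ :=
    Metric.tendsto_nhds_nhds.1 (tendsto_tsum_abs_invRho_sub (habs q₀ hq₀)) ε hε
  refine ⟨δ, hδ, fun q hq hqδ => ?_⟩
  let := M q
  let := M q₀
  calc GromovHausdorff.ghDist (Xq q) (Xq q₀) ≤ ∑' k, |invRho q k - invRho q₀ k| :=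
        GromovHausdorff.ghDist_le_of_dist_eq_abs_sub
          (.ofBijective _ ⟨Xq.point_injective hq.1 hq.2, Xq.point_surjective q⟩)
          (Xq.point_surjective q₀) (hdist q hq) (hdist q₀ hq₀)
          (abs_tailSum_sub_le (summable_invRho (habs q hq)) (summable_invRho (habs q₀ hq₀)))
    _ < ε := by
      have hsmall := hclose (show dist q q₀ < δ by rwa [Real.dist_eq])
      rw [Real.dist_eq, sub_zero] at hsmall
      exact (le_abs_self _).trans_lt hsmall
end
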